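/- Let Q be symmetric with λ_Q < 0. Then the minimum of h(y) = yᵀQy + 2gᵀy over the unit ball {y : ‖y‖ ≤ 1} equals the minimum of the convex function f(y) = yᵀ(Q − λ_Q I)y + 2gᵀy + λ_Q over the same ball. -/

import Mathlib

/-!
On the unit ball `f y = h y + λ (1 - ‖y‖²) ≤ h y` because `λ < 0`. Conversely, the quadratic form
of `Q - λ I` is invariant under translation by an eigenvector `v` for `λ`, so moving `y` along the
line `y + t v` until it meets the unit sphere, in the direction where `2 gᵀ(t v) ≤ 0`, yields a
point `z` with `h z = f y + 2 gᵀ(t v) ≤ f y`.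
-/

open Matrix

theorem csInf_image_eq_of_forall_le_of_forall_exists_le {α β : Type*}
    [ConditionallyCompleteLinearOrder β] {s : Set α} {f h : α → β} (hs : s.Nonempty)
    (hbdd : BddBelow (h '' s)) (hfh : ∀ y ∈ s, f y ≤ h y) (hhf : ∀ y ∈ s, ∃ z ∈ s, h z ≤ f y) :
    sInf (h '' s) = sInf (f '' s) := by
  obtain ⟨m, hm⟩ := hbdd
  have hbdd' : BddBelow (f '' s) := by
    refine ⟨m, ?_⟩
    rintro _ ⟨y, hy, rfl⟩
    obtain ⟨z, hz, hzy⟩ := hhf y hy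
    exact (hm ⟨z, hz, rfl⟩).trans hzy
  apply le_antisymm
  · refine le_csInf (hs.image f) ?_
    rintro _ ⟨y, hy, rfl⟩
    obtain ⟨z, hz, hzy⟩ := hhf y hy
    exact (csInf_le ⟨m, hm⟩ ⟨z, hz, rfl⟩).trans hzy
  · refine le_csInf (hs.image h) ?_
    rintro _ ⟨y, hy, rfl⟩
    exact (csInf_le hbdd' ⟨y, hy, rfl⟩).trans (hfh y hy)

theorem exists_nonneg_norm_add_smul_eq {E : Type*} [NormedAddCommGroup E] [NormedSpace ℝ E]
    {x v : E} {r : ℝ} (hx : ‖x‖ ≤ r) (hv : v ≠ 0) : ∃ t : ℝ, 0 ≤ t ∧ ‖x + t • v‖ = r := by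
  have hv' : 0 < ‖v‖ := norm_pos_iff.mpr hv
  set T := (r + ‖x‖) / ‖v‖
  have hT : 0 ≤ T := div_nonneg (by linarith [norm_nonneg x]) hv'.le
  have hrT : r ≤ ‖x + T • v‖ := by
    have hTv : ‖T • v‖ = r + ‖x‖ := by
      rw [norm_smul, Real.norm_of_nonneg hT, div_mul_cancel₀ _ hv'.ne']
    have htri := norm_sub_le (x + T • v) x
    rw [add_sub_cancel_left] at htri
    linarith
  obtain ⟨t, ht, hxt⟩ := intermediate_value_Icc hT (f := fun t : ℝ => ‖x + t • v‖)
    (by fun_prop) ⟨by simpa using hx, hrT⟩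
  exact ⟨t, ht.1, hxt⟩

theorem exists_norm_add_smul_eq_of_mul_nonpos {E : Type*} [NormedAddCommGroup E]
    [NormedSpace ℝ E] {x v : E} {r : ℝ} (hx : ‖x‖ ≤ r) (hv : v ≠ 0) (s : ℝ) :
    ∃ t : ℝ, ‖x + t • v‖ = r ∧ t * s ≤ 0 := by
  rcases le_total s 0 with hs | hs
  · obtain ⟨t, ht, hxt⟩ := exists_nonneg_norm_add_smul_eq hx hv
    exact ⟨t, hxt, mul_nonpos_of_nonneg_of_nonpos ht hs⟩
  · obtain ⟨t, ht, hxt⟩ := exists_nonneg_norm_add_smul_eq hx (neg_ne_zero.mpr hv)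
    exact ⟨-t, by rwa [neg_smul, ← smul_neg], by nlinarith⟩

theorem Matrix.IsSymm.add_dotProduct_mulVec_add_of_mulVec_eq_zero {ι R : Type*} [Fintype ι]
    [CommSemiring R] {A : Matrix ι ι R} (hA : A.IsSymm) {w : ι → R} (hw : A *ᵥ w = 0)
    (x : ι → R) : (x + w) ⬝ᵥ A *ᵥ (x + w) = x ⬝ᵥ A *ᵥ x := by
  have hwA : w ᵥ* A = 0 := by rw [← mulVec_transpose, hA.eq, hw]
  simp [mulVec_add, hw, add_dotProduct, dotProduct_mulVec w, hwA]

theorem EuclideanSpace.dotProduct_self {ι : Type*} [Fintype ι] (x : EuclideanSpace ℝ ι) :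
    x ⬝ᵥ x = ‖x‖ ^ 2 := by
  rw [← real_inner_self_eq_norm_sq, EuclideanSpace.inner_eq_star_dotProduct, star_trivial]

theorem EuclideanSpace.dotProduct_sub_smul_one_mulVec {ι : Type*} [Fintype ι] [DecidableEq ι]
    (A : Matrix ι ι ℝ) (c : ℝ) (x : EuclideanSpace ℝ ι) :
    x ⬝ᵥ (A - c • 1) *ᵥ x = x ⬝ᵥ A *ᵥ x - c * ‖x‖ ^ 2 := by
  rw [sub_mulVec, dotProduct_sub, smul_mulVec, one_mulVec, dotProduct_smul, dotProduct_self,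
    smul_eq_mul]

theorem classical_TRS_convex_reformulation_general {n : ℕ} (Q : Matrix (Fin n) (Fin n) ℝ)
    (g : EuclideanSpace ℝ (Fin n)) (lamQ : ℝ)
    (hQ : Q.IsSymm)
    (hev : ∃ v : EuclideanSpace ℝ (Fin n), v ≠ 0 ∧ Q.mulVec v = lamQ • (v : Fin n → ℝ))
    (hneg : lamQ < 0) :
    sInf ((fun y : EuclideanSpace ℝ (Fin n) => y ⬝ᵥ Q.mulVec y + 2 * (g ⬝ᵥ y)) ''
        Metric.closedBall 0 1) =
      sInf ((fun y : EuclideanSpace ℝ (Fin n) =>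
          y ⬝ᵥ (Q - lamQ • (1 : Matrix (Fin n) (Fin n) ℝ)).mulVec y + 2 * (g ⬝ᵥ y) + lamQ) ''
        Metric.closedBall 0 1) := by
  obtain ⟨v, hv0, hvQ⟩ := hev
  refine csInf_image_eq_of_forall_le_of_forall_exists_le ⟨0, by simp⟩
    ((isCompact_closedBall 0 1).bddBelow_image (by fun_prop)) (fun y hy => ?_) (fun y hy => ?_)
  all_goals
    rw [mem_closedBall_zero_iff] at hy
    beta_reduce
    rw [EuclideanSpace.dotProduct_sub_smul_one_mulVec]
  · nlinarith [pow_le_one₀ (n := 2) (norm_nonneg y) hy]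
  · obtain ⟨t, hz, hts⟩ := exists_norm_add_smul_eq_of_mul_nonpos hy hv0 (g ⬝ᵥ v)
    have hker : (Q - lamQ • 1) *ᵥ (t • v : EuclideanSpace ℝ (Fin n)) = 0 := by
      simp [sub_mulVec, smul_mulVec, mulVec_smul, hvQ]
    have hinv : (y + t • v).ofLp ⬝ᵥ (Q - lamQ • 1) *ᵥ (y + t • v).ofLp =
        y ⬝ᵥ (Q - lamQ • 1) *ᵥ y :=
      (hQ.sub (isSymm_one.smul lamQ)).add_dotProduct_mulVec_add_of_mulVec_eq_zero hker y
    rw [EuclideanSpace.dotProduct_sub_smul_one_mulVec,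
      EuclideanSpace.dotProduct_sub_smul_one_mulVec, hz] at hinv
    refine ⟨y + t • v, mem_closedBall_zero_iff.mpr hz.le, ?_⟩
    have hg : g ⬝ᵥ (y + t • v).ofLp = g ⬝ᵥ y + t * g ⬝ᵥ v := by
      rw [WithLp.ofLp_add, WithLp.ofLp_smul, dotProduct_add, dotProduct_smul, smul_eq_mul]
    linarith

theorem classical_TRS_convex_reformulation {n : ℕ} (Q : Matrix (Fin n) (Fin n) ℝ)
    (g : EuclideanSpace ℝ (Fin n)) (lamQ : ℝ)
    (hQ : Q.IsSymm)
    (hlb : ∀ y : EuclideanSpace ℝ (Fin n), lamQ * ‖y‖ ^ 2 ≤ y ⬝ᵥ Q.mulVec y)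
    (hev : ∃ v : EuclideanSpace ℝ (Fin n), v ≠ 0 ∧ Q.mulVec v = lamQ • (v : Fin n → ℝ))
    (hneg : lamQ < 0) :
    sInf ((fun y : EuclideanSpace ℝ (Fin n) => y ⬝ᵥ Q.mulVec y + 2 * (g ⬝ᵥ y)) ''
        Metric.closedBall 0 1) =
      sInf ((fun y : EuclideanSpace ℝ (Fin n) =>
          y ⬝ᵥ (Q - lamQ • (1 : Matrix (Fin n) (Fin n) ℝ)).mulVec y + 2 * (g ⬝ᵥ y) + lamQ) ''
        Metric.closedBall 0 1) :=
  classical_TRS_convex_reformulation_general Q g lamQ hQ hev hneg
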